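/- Let L be symmetric positive definite, c² not an eigenvalue of L, A = L − c²I nonsingular symmetric. For any vector w, the errors e^{AV}(w) = |A|^{-1}r − w and e^{P}(w) = L^{-1}r − w satisfy e^{AV}(w) = e^{P}(w) + (c²I − W_p) L^{-1}|A|^{-1} r, where W_p = 2 V_p |Λ_p| V_p* and V_p, Λ_p collect the eigenpairs of A with negative eigenvalues. -/

import Mathlib

open Matrix

/-- The matrix absolute value `|A| = V |Λ| V*` of a real symmetric matrix. -/
noncomputable def matAbs {n : Type*} [Fintype n] [DecidableEq n]
    {A : Matrix n n ℝ} (hA : A.IsHermitian) : Matrix n n ℝ :=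
  (hA.eigenvectorUnitary : Matrix n n ℝ) *
    Matrix.diagonal (fun i => |hA.eigenvalues i|) *
    star (hA.eigenvectorUnitary : Matrix n n ℝ)

/-- The negative part `V_p |Λ_p| V_p*` of a real symmetric matrix. -/
noncomputable def matNegPart {n : Type*} [Fintype n] [DecidableEq n]
    {A : Matrix n n ℝ} (hA : A.IsHermitian) : Matrix n n ℝ :=
  (hA.eigenvectorUnitary : Matrix n n ℝ) *
    Matrix.diagonal (fun i => if hA.eigenvalues i < 0 then |hA.eigenvalues i| else 0) *
    star (hA.eigenvectorUnitary : Matrix n n ℝ)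

/-!
Everything in sight is a function of `A`: `|A|`, its negative part and `L = A + c² I` are
`|x|`, `x⁻` and `x + c²` applied to `A` by the functional calculus. The relation is therefore
the scalar identity `|x|⁻¹ = (x + c²)⁻¹ + (c² - 2x⁻)(x + c²)⁻¹|x|⁻¹` on the spectrum of `A`,
which after clearing denominators is just `x = |x| - 2x⁻`.
-/

open scoped Ring

theorem abs_inv_eq_add_inv_mul {x : ℝ} (s : ℝ) (hx : x ≠ 0) (hxs : x + s ≠ 0) :
    |x|⁻¹ = (x + s)⁻¹ + (s - 2 * x⁻) * ((x + s)⁻¹ * |x|⁻¹) := by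
  have habs : |x| ≠ 0 := abs_ne_zero.mpr hx
  have hsplit : |x| - 2 * x⁻ = x := by
    rw [← posPart_add_negPart]
    linear_combination posPart_sub_negPart x
  field_simp
  linear_combination -hsplit

section CFC

variable {𝒜 : Type*} [Ring 𝒜] [StarRing 𝒜] [Algebra ℝ 𝒜] [TopologicalSpace 𝒜]
  [ContinuousFunctionalCalculus ℝ 𝒜 IsSelfAdjoint]

theorem ringInverse_cfc_abs_eq {a : 𝒜} (s : ℝ) (ha : IsSelfAdjoint a)
    (h0 : 0 ∉ spectrum ℝ a) (hs : -s ∉ spectrum ℝ a) :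
    (cfc (fun x : ℝ => |x|) a)⁻¹ʳ = (a + s • 1)⁻¹ʳ +
      (s • 1 - (2 : ℝ) • cfc (fun x : ℝ => x⁻) a) *
        ((a + s • 1)⁻¹ʳ * (cfc (fun x : ℝ => |x|) a)⁻¹ʳ) := by
  have hx : ∀ x ∈ spectrum ℝ a, x ≠ 0 := fun x hx h => h0 (h ▸ hx)
  have hxs : ∀ x ∈ spectrum ℝ a, x + s ≠ 0 := fun x hx h =>
    hs (eq_neg_of_add_eq_zero_left h ▸ hx)
  have habs : ∀ x ∈ spectrum ℝ a, |x| ≠ 0 := fun x hx' => abs_ne_zero.mpr (hx x hx')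
  have hshift : a + s • (1 : 𝒜) = cfc (· + s) a := by
    rw [cfc_add_const s (fun x : ℝ => x) a, cfc_id' ℝ a, Algebra.algebraMap_eq_smul_one]
  have hneg : s • (1 : 𝒜) - (2 : ℝ) • cfc (fun x : ℝ => x⁻) a =
      cfc (fun x => s - 2 * x⁻) a := by
    rw [cfc_sub (fun _ => s) (fun x => 2 * x⁻) a, cfc_const_mul 2 (fun x : ℝ => x⁻) a,
      cfc_const s a, Algebra.algebraMap_eq_smul_one]
  have hcont_shift_inv : ContinuousOn (fun x => (x + s)⁻¹) (spectrum ℝ a) :=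
    (continuousOn_id.add continuousOn_const).inv₀ hxs
  have hcont_abs_inv : ContinuousOn (fun x : ℝ => |x|⁻¹) (spectrum ℝ a) :=
    continuous_abs.continuousOn.inv₀ habs
  rw [hshift, hneg, ← cfc_inv (· + s) a hxs (by fun_prop), ← cfc_inv (|·|) a habs (by fun_prop),
    ← cfc_mul (fun x => (x + s)⁻¹) (fun x => |x|⁻¹) a hcont_shift_inv hcont_abs_inv,
    ← cfc_mul (fun x => s - 2 * x⁻) (fun x => (x + s)⁻¹ * |x|⁻¹) a (by fun_prop)
      (hcont_shift_inv.mul hcont_abs_inv),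
    ← cfc_add a (fun x => (x + s)⁻¹) _ hcont_shift_inv (by fun_prop)]
  exact cfc_congr fun x hx' => abs_inv_eq_add_inv_mul s (hx x hx') (hxs x hx')

end CFC

section Matrix

variable {n : Type*} [Fintype n] [DecidableEq n] {A : Matrix n n ℝ}

theorem matAbs_eq_cfc (hA : A.IsHermitian) : matAbs hA = cfc (fun x : ℝ => |x|) A := by
  rw [hA.cfc_eq, IsHermitian.cfc, Unitary.conjStarAlgAut_apply]
  rfl

theorem matNegPart_eq_cfc (hA : A.IsHermitian) : matNegPart hA = cfc (fun x : ℝ => x⁻) A := by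
  rw [hA.cfc_eq, IsHermitian.cfc, Unitary.conjStarAlgAut_apply, matNegPart]
  congr 3
  ext i
  by_cases h : hA.eigenvalues i < 0
  · simp [h, abs_of_neg h, negPart_eq_neg.mpr h.le]
  · simp [h, negPart_eq_zero.mpr (not_lt.mp h)]

end Matrix

/-- Error relation: with `A = L − c² I`, `W_p = 2 V_p |Λ_p| V_p*`, the errors
`e^{AV}(w) = |A|⁻¹ r − w` and `e^{P}(w) = L⁻¹ r − w` satisfy
`e^{AV}(w) = e^{P}(w) + (c² I − W_p) L⁻¹ |A|⁻¹ r`. -/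
theorem error_relation {n : Type*} [Fintype n] [DecidableEq n]
    {L : Matrix n n ℝ} (hL : L.PosDef) (c : ℝ)
    (hc : c ^ 2 ∉ spectrum ℝ L)
    {A : Matrix n n ℝ} (hAdef : A = L - c ^ 2 • (1 : Matrix n n ℝ))
    (hA : A.IsHermitian)
    (r w : n → ℝ) :
    (matAbs hA)⁻¹.mulVec r - w =
      (L⁻¹.mulVec r - w) +
        (c ^ 2 • (1 : Matrix n n ℝ) - (2 : ℝ) • matNegPart hA).mulVec
          (L⁻¹.mulVec ((matAbs hA)⁻¹.mulVec r)) := by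
  have hL_eq : A + c ^ 2 • 1 = L := by rw [hAdef, sub_add_cancel]
  have hL_shift : algebraMap ℝ (Matrix n n ℝ) (c ^ 2) + A = L := by
    rw [Algebra.algebraMap_eq_smul_one, add_comm, hL_eq]
  have h0 : 0 ∉ spectrum ℝ A := by
    rwa [← spectrum.add_mem_add_iff (s := c ^ 2), zero_add, hL_shift]
  have hs : -c ^ 2 ∉ spectrum ℝ A := by
    rw [← spectrum.add_mem_add_iff (s := c ^ 2), neg_add_cancel, hL_shift]
    exact spectrum.zero_notMem_iff ℝ |>.mpr hL.isUnit
  have key := ringInverse_cfc_abs_eq (c ^ 2) hA.isSelfAdjoint h0 hs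
  rw [← matAbs_eq_cfc hA, ← matNegPart_eq_cfc hA, hL_eq, ← nonsing_inv_eq_ringInverse,
    ← nonsing_inv_eq_ringInverse] at key
  conv_lhs => rw [key]
  rw [add_mulVec, ← mulVec_mulVec, ← mulVec_mulVec]
  abel
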